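/- If f : [0,1] → ℝ is continuous, then for every n > 1 and x ∈ [0,1], |R_n(f;x) − f(x)| ≤ (31/27) ω(n^{−1/2}), where ω is the modulus of continuity of f. -/

import Mathlib

/-- Generalized rising factorial with increment `h`: `x^(m,h) = x(x+h)···(x+(m-1)h)`. -/
noncomputable def rfac (x h : ℝ) (m : ℕ) : ℝ := ∏ i ∈ Finset.range m, (x + i * h)

/-- Pólya urn probability `p_{n,k}^{a,b,c}`. -/
noncomputable def polyaProb (a b c : ℝ) (n k : ℕ) : ℝ :=
  (n.choose k : ℝ) * rfac a c k * rfac b c (n - k) / rfac (a + b) c n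

/-- The operator `R_n(f;x)` with `c = -min{x,1-x}/(n-1)`. -/
noncomputable def Rop (n : ℕ) (f : ℝ → ℝ) (x : ℝ) : ℝ :=
  ∑ k ∈ Finset.range (n + 1),
    polyaProb x (1 - x) (-(min x (1 - x)) / ((n : ℝ) - 1)) n k * f ((k : ℝ) / n)

/-- Modulus of continuity of `f` on `[a,b]`. -/
noncomputable def modulus (f : ℝ → ℝ) (a b δ : ℝ) : ℝ :=
  sSup {d : ℝ | ∃ u ∈ Set.Icc a b, ∃ v ∈ Set.Icc a b, |u - v| ≤ δ ∧ d = |f u - f v|}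

/-!
The weights `polyaProb x (1 - x) c n k` form a probability distribution on the nodes `k / n`
(nonnegative since `(n - 1) c = -min x (1 - x)`), and by the Chu–Vandermonde identity for rising
factorials its variance is `x (1 - x) (1 + n c) / (n (1 + c))`. The classical estimate
`|f u - f v| ≤ (1 + (u - v)² / δ²) ω(δ)` with `δ² = 1 / n` bounds the error by
`(1 + x (1 - x) (1 + n c) / (1 + c)) ω(δ)`, and that fraction is at most `m (1 - m)² ≤ 4 / 27`,
where `m = min x (1 - x)`.
-/

open Finset

lemma rfac_succ (x h : ℝ) (m : ℕ) : rfac x h (m + 1) = rfac x h m * (x + m * h) :=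
  prod_range_succ _ _

lemma rfac_succ' (x h : ℝ) (m : ℕ) : rfac x h (m + 1) = x * rfac (x + h) h m := by
  simp only [rfac, prod_range_succ', Nat.cast_add, Nat.cast_one, CharP.cast_eq_zero, zero_mul,
    add_zero]
  rw [mul_comm]
  congr 1
  exact prod_congr rfl fun i _ => by ring

theorem sum_choose_mul_rfac_mul_rfac (c : ℝ) (n : ℕ) (a b : ℝ) :
    ∑ k ∈ range (n + 1), (n.choose k : ℝ) * rfac a c k * rfac b c (n - k) =
      rfac (a + b) c n := by
  induction n with
  | zero => simp [rfac]
  | succ n ih =>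
    have key : ∀ k ∈ range (n + 1),
        (n.choose k : ℝ) * (rfac a c k * rfac b c (n + 1 - k)) +
            (n.choose k : ℝ) * (rfac a c (k + 1) * rfac b c (n - k)) =
          (a + b + n * c) * ((n.choose k : ℝ) * rfac a c k * rfac b c (n - k)) := by
      intro k hk
      have hkn : k ≤ n := Nat.lt_succ_iff.mp (mem_range.mp hk)
      rw [Nat.sub_add_comm hkn, rfac_succ, rfac_succ, Nat.cast_sub hkn]
      ring
    simp only [mul_assoc] at ih key ⊢
    rw [sum_choose_succ_mul (fun i j => rfac a c i * rfac b c j), ← sum_add_distrib,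
      sum_congr rfl key, ← mul_sum, ih, rfac_succ]
    ring

lemma sum_natCast_mul_choose_succ_mul (n : ℕ) (g : ℕ → ℕ → ℝ) :
    ∑ k ∈ range (n + 2), (k : ℝ) * (n + 1).choose k * g k (n + 1 - k) =
      (n + 1) * ∑ k ∈ range (n + 1), (n.choose k : ℝ) * g (k + 1) (n - k) := by
  rw [sum_range_succ', mul_sum]
  simp only [Nat.cast_zero, zero_mul, add_zero, Nat.add_sub_add_right]
  refine sum_congr rfl fun k _ => ?_
  have h := congrArg (Nat.cast (R := ℝ)) (Nat.add_one_mul_choose_eq n k)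
  push_cast at h ⊢
  rw [mul_comm (k + 1 : ℝ), ← h, mul_assoc]

theorem sum_natCast_mul_choose_mul_rfac_mul_rfac (c : ℝ) (n : ℕ) (a b : ℝ) :
    ∑ k ∈ range (n + 2), (k : ℝ) * (n + 1).choose k * (rfac a c k * rfac b c (n + 1 - k)) =
      (n + 1) * a * rfac (a + c + b) c n := by
  rw [sum_natCast_mul_choose_succ_mul n (fun i j => rfac a c i * rfac b c j),
    ← sum_choose_mul_rfac_mul_rfac c n (a + c) b, mul_assoc, Finset.mul_sum _ _ a]
  refine congrArg _ (sum_congr rfl fun k _ => ?_)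
  rw [rfac_succ']
  ring

theorem sum_natCast_mul_sub_one_mul_choose_mul_rfac_mul_rfac (c : ℝ) (n : ℕ) (a b : ℝ) :
    ∑ k ∈ range (n + 3),
        (k : ℝ) * (n + 2).choose k * ((k - 1) * (rfac a c k * rfac b c (n + 2 - k))) =
      (n + 2) * (n + 1) * a * (a + c) * rfac (a + 2 * c + b) c n := by
  have h := sum_natCast_mul_choose_succ_mul (n + 1)
    (fun i j => ((i : ℝ) - 1) * (rfac a c i * rfac b c j))
  push_cast at h
  rw [show (n : ℝ) + 1 + 1 = n + 2 by ring] at h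
  have h2 : ∀ k ∈ range (n + 2),
      ((n + 1).choose k : ℝ) * ((k + 1 - 1) * (rfac a c (k + 1) * rfac b c (n + 1 - k))) =
        a * ((k : ℝ) * (n + 1).choose k * (rfac (a + c) c k * rfac b c (n + 1 - k))) := by
    intro k _
    rw [rfac_succ']
    ring
  rw [h, sum_congr rfl h2, ← Finset.mul_sum, sum_natCast_mul_choose_mul_rfac_mul_rfac,
    show a + c + c + b = a + 2 * c + b by ring]
  ring

theorem sum_polyaProb {a b c : ℝ} {n : ℕ} (h : rfac (a + b) c n ≠ 0) :
    ∑ k ∈ range (n + 1), polyaProb a b c n k = 1 := by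
  simp only [polyaProb, ← sum_div, sum_choose_mul_rfac_mul_rfac, div_self h]

theorem sum_polyaProb_mul_sq_sub (x c : ℝ) {n : ℕ} (hn : 2 ≤ n) (h : rfac 1 c n ≠ 0) :
    ∑ k ∈ range (n + 1), polyaProb x (1 - x) c n k * ((k : ℝ) / n - x) ^ 2 =
      x * (1 - x) * (1 + n * c) / (n * (1 + c)) := by
  obtain ⟨N, rfl⟩ : ∃ N, n = N + 2 := ⟨n - 2, by omega⟩
  have hD : rfac 1 c (N + 2) = (1 + c) * rfac (1 + 2 * c) c N := by
    rw [rfac_succ', rfac_succ', show 1 + c + c = 1 + 2 * c by ring]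
    ring
  have hc : 1 + c ≠ 0 := by rw [hD] at h; exact left_ne_zero_of_mul h
  have hP : rfac (1 + 2 * c) c N ≠ 0 := by rw [hD] at h; exact right_ne_zero_of_mul h
  have hN : (N : ℝ) + 2 ≠ 0 := by positivity
  -- `(k / n - x)² = k (k - 1) / n² + k (1 - 2 n x) / n² + x²`, each piece in the shape of one
  -- of the three identities above (the middle one at `N + 1`, hence `N + 1 + 1`)
  have hterm : ∀ k ∈ range (N + 3),
      polyaProb x (1 - x) c (N + 2) k * ((k : ℝ) / ↑(N + 2) - x) ^ 2 =
      (k : ℝ) * (N + 2).choose k * ((k - 1) * (rfac x c k * rfac (1 - x) c (N + 2 - k))) *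
          (1 / ((N + 2) ^ 2 * rfac 1 c (N + 2))) +
        (k : ℝ) * (N + 1 + 1).choose k * (rfac x c k * rfac (1 - x) c (N + 1 + 1 - k)) *
          ((1 - 2 * (N + 2) * x) / ((N + 2) ^ 2 * rfac 1 c (N + 2))) +
        ((N + 2).choose k : ℝ) * rfac x c k * rfac (1 - x) c (N + 2 - k) *
          (x ^ 2 / rfac 1 c (N + 2)) := by
    intro k _
    simp only [polyaProb, add_sub_cancel, hD]
    push_cast
    field_simp
    ring
  rw [sum_congr rfl hterm, sum_add_distrib, sum_add_distrib, ← sum_mul, ← sum_mul, ← sum_mul,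
    sum_natCast_mul_sub_one_mul_choose_mul_rfac_mul_rfac,
    sum_natCast_mul_choose_mul_rfac_mul_rfac c (N + 1), sum_choose_mul_rfac_mul_rfac,
    add_sub_cancel, hD, rfac_succ', show x + 2 * c + (1 - x) = 1 + 2 * c by ring,
    show x + c + (1 - x) + c = 1 + 2 * c by ring]
  push_cast
  field_simp
  ring

lemma rfac_nonneg_of_nonpos {x c : ℝ} {n k : ℕ} (hc : c ≤ 0) (hk : k ≤ n)
    (hx : 0 ≤ x + (n - 1) * c) : 0 ≤ rfac x c k :=
  prod_nonneg fun i hi => by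
    have : (i : ℝ) + 1 ≤ n := by exact_mod_cast (mem_range.mp hi).trans_le hk
    nlinarith

lemma rfac_pos_of_nonpos {x c : ℝ} {n k : ℕ} (hc : c ≤ 0) (hk : k ≤ n)
    (hx : 0 < x + (n - 1) * c) : 0 < rfac x c k :=
  prod_pos fun i hi => by
    have : (i : ℝ) + 1 ≤ n := by exact_mod_cast (mem_range.mp hi).trans_le hk
    nlinarith

theorem polyaProb_nonneg {a b c : ℝ} {n k : ℕ} (hc : c ≤ 0) (hk : k ≤ n)
    (ha : 0 ≤ a + (n - 1) * c) (hb : 0 ≤ b + (n - 1) * c) : 0 ≤ polyaProb a b c n k := by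
  have hab : 0 ≤ rfac (a + b) c n := prod_nonneg fun i hi => by
    have : (i : ℝ) + 1 ≤ n := by exact_mod_cast mem_range.mp hi
    nlinarith
  unfold polyaProb
  have := rfac_nonneg_of_nonpos hc hk ha
  have := rfac_nonneg_of_nonpos hc (Nat.sub_le n k) hb
  positivity

section Modulus

variable {f : ℝ → ℝ} {a b δ u v : ℝ}

lemma modulus_nonneg (f : ℝ → ℝ) (a b δ : ℝ) : 0 ≤ modulus f a b δ :=
  Real.sSup_nonneg <| by rintro _ ⟨u, -, v, -, -, rfl⟩; exact abs_nonneg _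

lemma abs_sub_le_modulus (hf : ContinuousOn f (Set.Icc a b)) (hu : u ∈ Set.Icc a b)
    (hv : v ∈ Set.Icc a b) (h : |u - v| ≤ δ) : |f u - f v| ≤ modulus f a b δ := by
  obtain ⟨C, hC⟩ := isCompact_Icc.exists_bound_of_continuousOn hf
  refine le_csSup ⟨C + C, ?_⟩ ⟨u, hu, v, hv, h, rfl⟩
  rintro _ ⟨u, hu, v, hv, -, rfl⟩
  exact (abs_sub _ _).trans (add_le_add (hC u hu) (hC v hv))

lemma abs_sub_le_natCast_mul_modulus (hf : ContinuousOn f (Set.Icc a b)) (N : ℕ) :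
    ∀ u ∈ Set.Icc a b, ∀ v ∈ Set.Icc a b,
      |u - v| ≤ N * δ → |f u - f v| ≤ N * modulus f a b δ := by
  induction N with
  | zero =>
    intro u _ v _ h
    rw [Nat.cast_zero, zero_mul, abs_nonpos_iff, sub_eq_zero] at h
    simp [h]
  | succ N ih =>
    intro u hu v hv h
    have hN : (0 : ℝ) < N + 1 := by positivity
    set w := (N * u + v) / (N + 1) with hw_def
    have hw : w ∈ Set.Icc a b := by
      obtain ⟨hu0, hu1⟩ := hu
      obtain ⟨hv0, hv1⟩ := hv
      constructor
      · rw [le_div_iff₀ hN]; nlinarith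
      · rw [div_le_iff₀ hN]; nlinarith
    have huw : |u - w| ≤ δ := by
      rw [show u - w = (u - v) / (N + 1) by rw [hw_def]; field_simp; ring, abs_div,
        abs_of_pos hN, div_le_iff₀ hN]
      push_cast at h
      linarith
    have hwv : |w - v| ≤ N * δ := by
      rw [show w - v = N * (u - v) / (N + 1) by rw [hw_def]; field_simp; ring, abs_div,
        abs_of_pos hN, abs_mul, Nat.abs_cast, div_le_iff₀ hN]
      push_cast at h
      nlinarith [abs_nonneg (u - v)]
    calc |f u - f v| ≤ |f u - f w| + |f w - f v| := abs_sub_le _ _ _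
      _ ≤ modulus f a b δ + N * modulus f a b δ :=
          add_le_add (abs_sub_le_modulus hf hu hw huw) (ih w hw v hv hwv)
      _ = (N + 1 : ℕ) * modulus f a b δ := by push_cast; ring

lemma natCeil_le_one_add_sq {t : ℝ} (ht : 0 ≤ t) : (⌈t⌉₊ : ℝ) ≤ 1 + t ^ 2 := by
  rcases le_or_gt t 1 with h | h
  · have : ⌈t⌉₊ ≤ 1 := Nat.ceil_le.mpr (by simpa using h)
    have : (⌈t⌉₊ : ℝ) ≤ 1 := by exact_mod_cast this
    nlinarith
  · nlinarith [Nat.ceil_lt_add_one ht]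

lemma abs_sub_le_one_add_sq_div_sq_mul_modulus (hf : ContinuousOn f (Set.Icc a b))
    (hδ : 0 < δ) (hu : u ∈ Set.Icc a b) (hv : v ∈ Set.Icc a b) :
    |f u - f v| ≤ (1 + (u - v) ^ 2 / δ ^ 2) * modulus f a b δ := by
  have ht : 0 ≤ |u - v| / δ := by positivity
  have hN : |u - v| ≤ ⌈|u - v| / δ⌉₊ * δ := (div_le_iff₀ hδ).mp (Nat.le_ceil _)
  calc |f u - f v| ≤ ⌈|u - v| / δ⌉₊ * modulus f a b δ :=
        abs_sub_le_natCast_mul_modulus hf _ u hu v hv hN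
    _ ≤ (1 + (|u - v| / δ) ^ 2) * modulus f a b δ :=
        mul_le_mul_of_nonneg_right (natCeil_le_one_add_sq ht) (modulus_nonneg f a b δ)
    _ = (1 + (u - v) ^ 2 / δ ^ 2) * modulus f a b δ := by rw [div_pow, sq_abs]

theorem abs_sum_mul_sub_le_modulus {ι : Type*} (s : Finset ι) (w t : ι → ℝ) {x : ℝ}
    (hf : ContinuousOn f (Set.Icc a b)) (hδ : 0 < δ) (hw : ∀ i ∈ s, 0 ≤ w i)
    (hw1 : ∑ i ∈ s, w i = 1) (ht : ∀ i ∈ s, t i ∈ Set.Icc a b) (hx : x ∈ Set.Icc a b) :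
    |∑ i ∈ s, w i * f (t i) - f x| ≤
      (1 + (∑ i ∈ s, w i * (t i - x) ^ 2) / δ ^ 2) * modulus f a b δ := by
  calc |∑ i ∈ s, w i * f (t i) - f x| = |∑ i ∈ s, w i * (f (t i) - f x)| := by
        simp only [mul_sub, sum_sub_distrib, ← sum_mul, hw1, one_mul]
    _ ≤ ∑ i ∈ s, w i * |f (t i) - f x| := by
        refine (abs_sum_le_sum_abs _ _).trans (sum_le_sum fun i hi => ?_)
        rw [abs_mul, abs_of_nonneg (hw i hi)]
    _ ≤ ∑ i ∈ s, w i * ((1 + (t i - x) ^ 2 / δ ^ 2) * modulus f a b δ) :=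
        sum_le_sum fun i hi => mul_le_mul_of_nonneg_left
          (abs_sub_le_one_add_sq_div_sq_mul_modulus hf hδ (ht i hi) hx) (hw i hi)
    _ = (∑ i ∈ s, w i) * modulus f a b δ +
          (∑ i ∈ s, w i * (t i - x) ^ 2) / δ ^ 2 * modulus f a b δ := by
        rw [sum_mul, sum_div, sum_mul, ← sum_add_distrib]
        exact sum_congr rfl fun i _ => by ring
    _ = (1 + (∑ i ∈ s, w i * (t i - x) ^ 2) / δ ^ 2) * modulus f a b δ := by rw [hw1]; ring

end Modulus

lemma mul_one_sub_sq_le {m : ℝ} (hm : m ≤ 4 / 3) : m * (1 - m) ^ 2 ≤ 4 / 27 := by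
  nlinarith [mul_nonneg (sq_nonneg (3 * m - 1)) (by linarith : (0 : ℝ) ≤ 4 - 3 * m)]

theorem mul_one_sub_mul_one_add_mul_div_le {x c n : ℝ} (hx : x ∈ Set.Icc (0 : ℝ) 1)
    (hc : c ≤ 0) (hc1 : 0 < 1 + c) (hnc : (n - 1) * c = -min x (1 - x)) :
    x * (1 - x) * (1 + n * c) / (1 + c) ≤ 4 / 27 := by
  obtain ⟨hx0, hx1⟩ := hx
  set m := min x (1 - x)
  have hm0 : 0 ≤ m := le_min hx0 (by linarith)
  have hm1 : m ≤ 1 := (min_le_left _ _).trans hx1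
  have hxm : x * (1 - x) = m * (1 - m) := by
    rcases min_choice x (1 - x) with h | h <;> simp only [m, h]; ring
  rw [div_le_iff₀ hc1, hxm]
  -- `1 + n c = (1 + c) - m ≤ (1 - m)(1 + c)` because `m c ≤ 0`
  have : 1 + n * c ≤ (1 - m) * (1 + c) := by nlinarith
  calc m * (1 - m) * (1 + n * c) ≤ m * (1 - m) * ((1 - m) * (1 + c)) := by gcongr
    _ = m * (1 - m) ^ 2 * (1 + c) := by ring
    _ ≤ 4 / 27 * (1 + c) := by gcongr; exact mul_one_sub_sq_le (by linarith)

theorem Rop_popoviciu (f : ℝ → ℝ) (hf : ContinuousOn f (Set.Icc (0 : ℝ) 1))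
    (n : ℕ) (hn : 1 < n) (x : ℝ) (hx : x ∈ Set.Icc (0 : ℝ) 1) :
    |Rop n f x - f x| ≤ (31 / 27) * modulus f 0 1 ((n : ℝ) ^ (-(1 : ℝ) / 2)) := by
  set c := -min x (1 - x) / ((n : ℝ) - 1)
  set δ := (n : ℝ) ^ (-(1 : ℝ) / 2)
  have hn1 : (1 : ℝ) ≤ n - 1 := by
    have : (2 : ℝ) ≤ n := by exact_mod_cast hn
    linarith
  have hm0 : 0 ≤ min x (1 - x) := le_min hx.1 (by linarith [hx.2])
  have hm1 : min x (1 - x) ≤ 1 / 2 := by linarith [min_le_left x (1 - x), min_le_right x (1 - x)]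
  have hnc : ((n : ℝ) - 1) * c = -min x (1 - x) := mul_div_cancel₀ _ (by linarith)
  have hc : c ≤ 0 := div_nonpos_of_nonpos_of_nonneg (by linarith) (by linarith)
  have hc1 : 0 < 1 + c := by nlinarith
  have hδ : δ ^ 2 = 1 / n := by
    rw [← Real.rpow_natCast, ← Real.rpow_mul (Nat.cast_nonneg n)]
    norm_num [Real.rpow_neg_one]
  have hD : rfac 1 c n ≠ 0 :=
    (rfac_pos_of_nonpos hc le_rfl (by linarith [min_le_left x (1 - x)])).ne'
  calc |Rop n f x - f x|
      ≤ (1 + (∑ k ∈ range (n + 1), polyaProb x (1 - x) c n k * ((k : ℝ) / n - x) ^ 2) /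
          δ ^ 2) * modulus f 0 1 δ := by
        refine abs_sum_mul_sub_le_modulus _ _ _ hf (by positivity) (fun k hk => ?_)
          (sum_polyaProb (by rwa [add_sub_cancel])) (fun k hk => ?_) hx
        · have hkn := Nat.lt_succ_iff.mp (mem_range.mp hk)
          exact polyaProb_nonneg hc hkn (by linarith [min_le_left x (1 - x)])
            (by linarith [min_le_right x (1 - x)])
        · have hkn : (k : ℝ) ≤ n := by exact_mod_cast Nat.lt_succ_iff.mp (mem_range.mp hk)
          exact ⟨by positivity, div_le_one_of_le₀ hkn (Nat.cast_nonneg n)⟩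
    _ = (1 + x * (1 - x) * (1 + n * c) / (1 + c)) * modulus f 0 1 δ := by
        rw [sum_polyaProb_mul_sq_sub x c hn hD, hδ]
        field_simp
    _ ≤ (1 + 4 / 27) * modulus f 0 1 δ := by
        have := mul_one_sub_mul_one_add_mul_div_le hx hc hc1 hnc
        exact mul_le_mul_of_nonneg_right (by linarith) (modulus_nonneg f 0 1 δ)
    _ = 31 / 27 * modulus f 0 1 δ := by norm_num
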